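/- Let ω₀, β ∈ ℝ, let W : ℝ → ℝ be continuous with W(0) = 0, let u₀ : ℝ³ → ℝ be continuously differentiable with compact support and radially symmetric, and assume the Pohozaev–Derrick identity ∫W(u₀)dx = ½ω₀²∫u₀²dx − (1/6)∫|∇u₀|²dx − (5/3)ω₀²β² K(u₀). Let v ∈ (−1,1), γ = 1/√(1−v²), and define the boosted soliton fields u_v(t,x) = u₀(γ(x₁−vt), x₂, x₃) and S_v(t,x) = ω₀γ(v x₁ − t). Then for every t ∈ ℝ the matter-field energy E[σ_v] = ½∫_{ℝ³}(|∂ₜu_v|² + |∇u_v|²)dx + ½∫_{ℝ³}((∂ₜS_v)² + |∇S_v|²)u_v² dx + ∫_{ℝ³}W(u_v)dx equals γ m − (5/(3γ)) ω₀² β² K(u₀), where m = (1/3)∫_{ℝ³}|∇u₀|²dx + ω₀²∫_{ℝ³}u₀²dx. -/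

import Mathlib

open MeasureTheory Real

/-- Physical space `ℝ³`. -/
abbrev R3 : Type := Fin 3 → ℝ

/-- Partial derivative `∂_{x_i}` of a function on space `ℝ³`. -/
noncomputable def pd (i : Fin 3) (f : R3 → ℝ) (x : R3) : ℝ :=
  fderiv ℝ f x (Pi.single i 1)

/-- The Coulomb energy `K(u) = ∬ u(x)u(y)/(4π|x−y|) dx dy` associated with the Green
function `G(x) = 1/(4π|x|)` of `−Δ` on `ℝ³` (Euclidean distance). -/
noncomputable def coulomb (u : R3 → ℝ) : ℝ :=
  ∫ x : R3, ∫ y : R3, u x * u y / (4 * π * Real.sqrt (∑ i, (x i - y i) ^ 2))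

/-!
At a fixed time the boosted profile is `u₀` composed with an affine map of determinant `γ`
(a stretch by `γ` in the first coordinate followed by a translation), so every spatial
integral picks up the factor `γ⁻¹`, while the chain rule gives `∂ₜu_v = -γv ∂₁u₀` and
`∂₁u_v = γ ∂₁u₀`. Radial symmetry makes `∫ (∂ᵢu₀)²` independent of `i`, the
Pohozaev–Derrick identity eliminates `∫ W(u₀)`, and `γ²(1 + v²) + 1 = 2γ²` collects
everything into `γ m`.
-/

section ChangeOfVariables

variable {E F : Type*} [NormedAddCommGroup E] [NormedSpace ℝ E] [MeasurableSpace E]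
  [BorelSpace E] [FiniteDimensional ℝ E] (μ : Measure E) [μ.IsAddHaarMeasure]
  [NormedAddCommGroup F] [NormedSpace ℝ F]

theorem integral_comp_linearMap_add {L : E →ₗ[ℝ] E} (hL : LinearMap.det L ≠ 0) (c : E)
    (g : E → F) : ∫ x, g (L x + c) ∂μ = |(LinearMap.det L)⁻¹| • ∫ x, g x ∂μ := by
  let e : E ≃ᵐ E :=
    (L.equivOfDetNeZero hL).toContinuousLinearEquiv.toHomeomorph.toMeasurableEquiv
  calc ∫ x, g (L x + c) ∂μ = ∫ y, g (y + c) ∂μ.map e :=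
        (integral_map_equiv e (fun y => g (y + c))).symm
    _ = |(LinearMap.det L)⁻¹| • ∫ x, g x ∂μ := by
      rw [show (e : E → E) = L from rfl, Measure.map_linearMap_addHaar_eq_smul_addHaar μ hL,
        integral_smul_measure, integral_add_right_eq_self, ENNReal.toReal_ofReal (abs_nonneg _)]

end ChangeOfVariables

theorem integral_comp_perm {ι F : Type*} [Fintype ι] [NormedAddCommGroup F] [NormedSpace ℝ F]
    (σ : Equiv.Perm ι) (g : (ι → ℝ) → F) : ∫ x, g (x ∘ σ) = ∫ x, g x := by
  have := (volume_measurePreserving_piCongrLeft (fun _ => ℝ) σ.symm).integral_comp' g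
  convert this using 3 with x
  congr 1
  funext i
  simp [MeasurableEquiv.coe_piCongrLeft, Equiv.piCongrLeft_apply]

theorem comp_perm_of_radial {ι : Type*} [Fintype ι] {u : (ι → ℝ) → ℝ} {f : ℝ → ℝ}
    (hrad : ∀ x, u x = f (√(∑ i, x i ^ 2))) (σ : Equiv.Perm ι) (x : ι → ℝ) :
    u (x ∘ σ) = u x := by
  rw [hrad, hrad, Function.comp_def, Equiv.sum_comp σ (fun i => x i ^ 2)]

theorem deriv_comp_add_smul {E F : Type*} [NormedAddCommGroup E] [NormedSpace ℝ E]
    [NormedAddCommGroup F] [NormedSpace ℝ F] {u : E → F} (a w : E) (t : ℝ)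
    (hu : DifferentiableAt ℝ u (a + t • w)) :
    deriv (fun s : ℝ => u (a + s • w)) t = fderiv ℝ u (a + t • w) w := by
  have hline : HasDerivAt (fun s : ℝ => a + s • w) w t := by
    simpa using ((hasDerivAt_id t).smul_const w).const_add a
  exact (hu.hasFDerivAt.comp_hasDerivAt t hline).deriv

theorem pd_comp_linearMap_add {u : R3 → ℝ} (L : R3 →ₗ[ℝ] R3) (c x : R3)
    (hu : DifferentiableAt ℝ u (L x + c)) (i : Fin 3) :
    pd i (fun y => u (L y + c)) x = fderiv ℝ u (L x + c) (L (Pi.single i 1)) := by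
  have hL : HasFDerivAt (fun y => L y + c) (LinearMap.toContinuousLinearMap L) x :=
    (LinearMap.toContinuousLinearMap L).hasFDerivAt.add_const c
  change fderiv ℝ (u ∘ fun y => L y + c) x _ = _
  rw [(hu.hasFDerivAt.comp x hL).fderiv]
  rfl

theorem pd_const_mul_apply_add (a b : ℝ) (i j : Fin 3) (x : R3) :
    pd i (fun y => a * y j + b) x = (Pi.single j a : R3) i := by
  rw [pd, (((hasFDerivAt_apply j x).const_mul a).add_const b).fderiv]
  simp [Pi.single_apply, eq_comm]

theorem pd_eq_pd_comp_perm {u : R3 → ℝ} (hu : Differentiable ℝ u) {σ : Equiv.Perm (Fin 3)}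
    (hσ : ∀ x, u (x ∘ σ) = u x) (i : Fin 3) (x : R3) :
    pd i u x = pd (σ.symm i) u (x ∘ σ) := by
  have hperm := pd_comp_linearMap_add (LinearMap.funLeft ℝ ℝ σ) 0 x (hu _) i
  change pd i (fun y => u (y ∘ σ + 0)) x
    = fderiv ℝ u (x ∘ σ + 0) (Pi.single i 1 ∘ σ) at hperm
  simp only [add_zero, hσ, Pi.single_comp_equiv] at hperm
  exact hperm

theorem integral_comp_pd_of_radial {u : R3 → ℝ} (hu : Differentiable ℝ u) {f : ℝ → ℝ}
    (hrad : ∀ x, u x = f (√(∑ i, x i ^ 2))) (g : ℝ → ℝ) (i : Fin 3) :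
    ∫ x, g (pd i u x) = ∫ x, g (pd 0 u x) := by
  have hσ := comp_perm_of_radial hrad (Equiv.swap 0 i)
  simp_rw [pd_eq_pd_comp_perm hu hσ i, Equiv.symm_swap, Equiv.swap_apply_right]
  exact integral_comp_perm (Equiv.swap 0 i) (fun x => g (pd 0 u x))

theorem integrable_sq_of_hasCompactSupport {E : Type*} [TopologicalSpace E] [MeasurableSpace E]
    [OpensMeasurableSpace E] {μ : Measure E} [IsFiniteMeasureOnCompacts μ] {g : E → ℝ}
    (hc : Continuous g) (hs : HasCompactSupport g) : Integrable (fun x => g x ^ 2) μ :=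
  (hc.pow 2).integrable_of_hasCompactSupport (by simpa only [sq] using hs.mul_left)

theorem integrable_sq_pd {u : R3 → ℝ} (hu : ContDiff ℝ 1 u) (hs : HasCompactSupport u)
    (i : Fin 3) : Integrable (fun x => pd i u x ^ 2) :=
  integrable_sq_of_hasCompactSupport
    ((hu.continuous_fderiv one_ne_zero).clm_apply continuous_const) (hs.fderiv_apply ℝ _)

theorem integral_sum_sq_pd_of_radial {u : R3 → ℝ} (hu : ContDiff ℝ 1 u)
    (hs : HasCompactSupport u) {f : ℝ → ℝ} (hrad : ∀ x, u x = f (√(∑ i, x i ^ 2))) :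
    ∫ x, ∑ i, pd i u x ^ 2 = 3 * ∫ x, pd 0 u x ^ 2 := by
  rw [integral_finsetSum _ fun i _ => integrable_sq_pd hu hs i]
  simp [integral_comp_pd_of_radial (hu.differentiable one_ne_zero) hrad (· ^ 2)]

section Boost

variable (γ v : ℝ)

noncomputable def stretchFirst : R3 →ₗ[ℝ] R3 :=
  Matrix.toLin' (Matrix.diagonal (Function.update (1 : R3) 0 γ))

theorem stretchFirst_apply (x : R3) (j : Fin 3) :
    stretchFirst γ x j = Function.update (1 : R3) 0 γ j * x j := by
  simp [stretchFirst, Matrix.toLin'_apply, Matrix.mulVec_diagonal]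

theorem det_stretchFirst : LinearMap.det (stretchFirst γ) = γ := by
  simp [stretchFirst, LinearMap.det_toLin', Fin.prod_univ_three]

theorem update_boost_eq (t : ℝ) (x : R3) :
    Function.update x 0 (γ * (x 0 - v * t))
      = stretchFirst γ x + t • Pi.single 0 (-(γ * v)) := by
  funext j
  rcases eq_or_ne j 0 with rfl | hj
  · simp only [Function.update_self, Pi.add_apply, stretchFirst_apply, Pi.smul_apply,
      Pi.single_eq_same, smul_eq_mul]
    ring
  · simp [stretchFirst_apply, hj]

variable {γ}

theorem integral_comp_boost {F : Type*} [NormedAddCommGroup F] [NormedSpace ℝ F] (hγ : 0 < γ)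
    (t : ℝ) (g : R3 → F) :
    ∫ x, g (Function.update x 0 (γ * (x 0 - v * t))) = γ⁻¹ • ∫ x, g x := by
  simp_rw [update_boost_eq]
  rw [integral_comp_linearMap_add volume (by rw [det_stretchFirst]; exact hγ.ne'),
    det_stretchFirst, abs_of_pos (inv_pos.2 hγ)]

theorem pd_comp_boost {u : R3 → ℝ} (hu : Differentiable ℝ u) (t : ℝ) (i : Fin 3) (x : R3) :
    pd i (fun y => u (Function.update y 0 (γ * (y 0 - v * t)))) x
      = Function.update (1 : R3) 0 γ i * pd i u (Function.update x 0 (γ * (x 0 - v * t))) := by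
  simp_rw [update_boost_eq]
  rw [pd_comp_linearMap_add _ _ _ (hu _)]
  have hsingle :
      stretchFirst γ (Pi.single i 1) = Function.update (1 : R3) 0 γ i • Pi.single i 1 := by
    funext j
    rcases eq_or_ne j i with rfl | hj <;> simp [stretchFirst_apply, *]
  rw [hsingle, map_smul, smul_eq_mul, pd]

theorem deriv_comp_boost {u : R3 → ℝ} (hu : Differentiable ℝ u) (t : ℝ) (x : R3) :
    deriv (fun s => u (Function.update x 0 (γ * (x 0 - v * s)))) t
      = -(γ * v) * pd 0 u (Function.update x 0 (γ * (x 0 - v * t))) := by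
  simp_rw [update_boost_eq]
  have hw (φ : R3 →L[ℝ] ℝ) :
      φ (Pi.single 0 (-(γ * v))) = -(γ * v) * φ (Pi.single 0 1) := by
    rw [← smul_eq_mul (-(γ * v)), ← map_smul, ← Pi.single_smul', smul_eq_mul, mul_one]
  rw [deriv_comp_add_smul _ _ _ (hu _), hw, pd]

end Boost

section Energy

variable (v : ℝ) {γ : ℝ}

theorem integral_field_energy_boost {u : R3 → ℝ} (hu : ContDiff ℝ 1 u)
    (hs : HasCompactSupport u) {f : ℝ → ℝ} (hrad : ∀ x, u x = f (√(∑ i, x i ^ 2)))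
    (hγ : 0 < γ) (t : ℝ) :
    ∫ x, ((deriv (fun s => u (Function.update x 0 (γ * (x 0 - v * s)))) t) ^ 2
        + ∑ i, (pd i (fun y => u (Function.update y 0 (γ * (y 0 - v * t)))) x) ^ 2)
      = γ⁻¹ * ((γ ^ 2 * (1 + v ^ 2) + 2) * ∫ x, pd 0 u x ^ 2) := by
  have hd := hu.differentiable one_ne_zero
  set c := γ ^ 2 * (1 + v ^ 2)
  have h0 : Integrable (fun y => c * pd 0 u y ^ 2) := (integrable_sq_pd hu hs 0).const_mul c
  have h01 : Integrable (fun y => c * pd 0 u y ^ 2 + pd 1 u y ^ 2) :=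
    h0.add (integrable_sq_pd hu hs 1)
  calc _ = ∫ x, (fun y => c * pd 0 u y ^ 2 + pd 1 u y ^ 2 + pd 2 u y ^ 2)
          (Function.update x 0 (γ * (x 0 - v * t))) := by
        congr 1 with x
        simp only [deriv_comp_boost v hd, pd_comp_boost v hd, Fin.sum_univ_three,
          Function.update_self, ne_eq, Fin.reduceEq, not_false_eq_true, Function.update_of_ne,
          Pi.one_apply, one_mul, c]
        ring
    _ = γ⁻¹ • ∫ y, (c * pd 0 u y ^ 2 + pd 1 u y ^ 2 + pd 2 u y ^ 2) :=
        integral_comp_boost v hγ t (fun y => c * pd 0 u y ^ 2 + pd 1 u y ^ 2 + pd 2 u y ^ 2)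
    _ = γ⁻¹ * ((c + 2) * ∫ x, pd 0 u x ^ 2) := by
        rw [smul_eq_mul, integral_add h01 (integrable_sq_pd hu hs 2),
          integral_add h0 (integrable_sq_pd hu hs 1), integral_const_mul,
          integral_comp_pd_of_radial hd hrad (· ^ 2) 1,
          integral_comp_pd_of_radial hd hrad (· ^ 2) 2]
        ring

theorem integral_phase_energy_boost (ω₀ : ℝ) (u : R3 → ℝ) (hγ : 0 < γ) (t : ℝ) :
    ∫ x, ((deriv (fun s => ω₀ * γ * (v * x 0 - s)) t) ^ 2
        + ∑ i, (pd i (fun y => ω₀ * γ * (v * y 0 - t)) x) ^ 2)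
        * u (Function.update x 0 (γ * (x 0 - v * t))) ^ 2
      = γ⁻¹ * (ω₀ ^ 2 * γ ^ 2 * (1 + v ^ 2) * ∫ x, u x ^ 2) := by
  have hphase : (fun y : R3 => ω₀ * γ * (v * y 0 - t))
      = fun y => ω₀ * γ * v * y 0 + -(ω₀ * γ * t) := by
    funext y; ring
  calc _ = ∫ x, (fun y => ω₀ ^ 2 * γ ^ 2 * (1 + v ^ 2) * u y ^ 2)
          (Function.update x 0 (γ * (x 0 - v * t))) := by
        congr 1 with x
        simp only [deriv_const_mul_field', deriv_const_sub_id', hphase, pd_const_mul_apply_add,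
          Fin.sum_univ_three, Pi.single_eq_same, ne_eq, Fin.reduceEq, not_false_eq_true,
          Pi.single_eq_of_ne]
        ring
    _ = _ := by
        rw [integral_comp_boost v hγ t (fun y => ω₀ ^ 2 * γ ^ 2 * (1 + v ^ 2) * u y ^ 2),
          smul_eq_mul, integral_const_mul]

end Energy

theorem lorentz_factor_pos_and_sq_mul_eq_one {v γ : ℝ} (hv : v ∈ Set.Ioo (-1 : ℝ) 1)
    (hγ : γ = 1 / √(1 - v ^ 2)) : 0 < γ ∧ γ ^ 2 * (1 - v ^ 2) = 1 := by
  have h : 0 < 1 - v ^ 2 := by nlinarith [hv.1, hv.2]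
  subst hγ
  refine ⟨by positivity, ?_⟩
  rw [div_pow, sq_sqrt h.le]
  field_simp

theorem energy_of_moving_soliton_general
    (ω₀ β : ℝ) (W : ℝ → ℝ)
    (u₀ : R3 → ℝ) (hu : ContDiff ℝ 1 u₀) (hsupp : HasCompactSupport u₀)
    (f : ℝ → ℝ) (hrad : ∀ x : R3, u₀ x = f (Real.sqrt (∑ i, (x i) ^ 2)))
    (hPoho : (∫ x : R3, W (u₀ x)) =
      (1 / 2) * ω₀ ^ 2 * (∫ x : R3, (u₀ x) ^ 2)
        - (1 / 6) * (∫ x : R3, ∑ i, (pd i u₀ x) ^ 2)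
        - (5 / 3) * ω₀ ^ 2 * β ^ 2 * coulomb u₀)
    (v : ℝ) (hv : v ∈ Set.Ioo (-1 : ℝ) 1)
    (γ : ℝ) (hγ : γ = 1 / Real.sqrt (1 - v ^ 2))
    (uv Sv : ℝ → R3 → ℝ)
    (huv : ∀ t : ℝ, ∀ x : R3, uv t x = u₀ (Function.update x 0 (γ * (x 0 - v * t))))
    (hSv : ∀ t : ℝ, ∀ x : R3, Sv t x = ω₀ * γ * (v * x 0 - t))
    (m : ℝ)
    (hm : m = (1 / 3) * (∫ x : R3, ∑ i, (pd i u₀ x) ^ 2) + ω₀ ^ 2 * ∫ x : R3, (u₀ x) ^ 2) :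
    ∀ t : ℝ,
      (1 / 2) * (∫ x : R3,
          ((deriv (fun s => uv s x) t) ^ 2 + ∑ i, (pd i (uv t) x) ^ 2))
        + (1 / 2) * (∫ x : R3,
            ((deriv (fun s => Sv s x) t) ^ 2 + ∑ i, (pd i (Sv t) x) ^ 2) * (uv t x) ^ 2)
        + (∫ x : R3, W (uv t x))
      = γ * m - (5 / (3 * γ)) * ω₀ ^ 2 * β ^ 2 * coulomb u₀ := by
  intro t
  obtain ⟨hγ0, hγv⟩ := lorentz_factor_pos_and_sq_mul_eq_one hv hγ
  obtain rfl : uv = fun s x => u₀ (Function.update x 0 (γ * (x 0 - v * s))) :=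
    funext fun s => funext (huv s)
  obtain rfl : Sv = fun s x => ω₀ * γ * (v * x 0 - s) := funext fun s => funext (hSv s)
  rw [integral_field_energy_boost v hu hsupp hrad hγ0,
    integral_phase_energy_boost v ω₀ u₀ hγ0,
    integral_comp_boost v hγ0 t (fun y => W (u₀ y)), smul_eq_mul, hm, hPoho,
    integral_sum_sq_pd_of_radial hu hsupp hrad]
  field_simp
  linear_combination -18 * ((∫ x, pd 0 u₀ x ^ 2) + ω₀ ^ 2 * ∫ x, u₀ x ^ 2) * hγv

/-- under the Pohozaev–Derrick identity, the matter-field energy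
`E[σ_v] = ½∫(|∂ₜu_v|² + |∇u_v|²) + ½∫((∂ₜS_v)² + |∇S_v|²)u_v² + ∫W(u_v)` of the boosted
soliton equals `γm − (5/(3γ))ω₀²β²K(u₀)`, where `m = (1/3)∫|∇u₀|² + ω₀²∫u₀²`. -/
theorem energy_of_moving_soliton
    (ω₀ β : ℝ) (W : ℝ → ℝ) (hWc : Continuous W) (hW0 : W 0 = 0)
    (u₀ : R3 → ℝ) (hu : ContDiff ℝ 1 u₀) (hsupp : HasCompactSupport u₀)
    (f : ℝ → ℝ) (hrad : ∀ x : R3, u₀ x = f (Real.sqrt (∑ i, (x i) ^ 2)))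
    (hPoho : (∫ x : R3, W (u₀ x)) =
      (1 / 2) * ω₀ ^ 2 * (∫ x : R3, (u₀ x) ^ 2)
        - (1 / 6) * (∫ x : R3, ∑ i, (pd i u₀ x) ^ 2)
        - (5 / 3) * ω₀ ^ 2 * β ^ 2 * coulomb u₀)
    (v : ℝ) (hv : v ∈ Set.Ioo (-1 : ℝ) 1)
    (γ : ℝ) (hγ : γ = 1 / Real.sqrt (1 - v ^ 2))
    (uv Sv : ℝ → R3 → ℝ)
    (huv : ∀ t : ℝ, ∀ x : R3, uv t x = u₀ (Function.update x 0 (γ * (x 0 - v * t))))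
    (hSv : ∀ t : ℝ, ∀ x : R3, Sv t x = ω₀ * γ * (v * x 0 - t))
    (m : ℝ)
    (hm : m = (1 / 3) * (∫ x : R3, ∑ i, (pd i u₀ x) ^ 2) + ω₀ ^ 2 * ∫ x : R3, (u₀ x) ^ 2) :
    ∀ t : ℝ,
      (1 / 2) * (∫ x : R3,
          ((deriv (fun s => uv s x) t) ^ 2 + ∑ i, (pd i (uv t) x) ^ 2))
        + (1 / 2) * (∫ x : R3,
            ((deriv (fun s => Sv s x) t) ^ 2 + ∑ i, (pd i (Sv t) x) ^ 2) * (uv t x) ^ 2)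
        + (∫ x : R3, W (uv t x))
      = γ * m - (5 / (3 * γ)) * ω₀ ^ 2 * β ^ 2 * coulomb u₀ :=
  energy_of_moving_soliton_general ω₀ β W u₀ hu hsupp f hrad hPoho v hv γ hγ uv Sv huv hSv m hm
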